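/- Fix T > 0, k > 0, and a one-dimensional Brownian motion X. For every probability measure μ on ℝ and every 0 ≤ t ≤ T, the martingale N_t = ∫_ℝ 𝓔(vX)_t μ(dv) satisfies E[sin(kX_t) N_t] ≥ −e^{−k²t/2}. -/

import Mathlib

open MeasureTheory ProbabilityTheory Filter

noncomputable section

/-- Space-time Hermite polynomials `H n t x` (with variance parameter `t`), defined by the
standard recurrence `H_{n+1}(t,x) = x H_n(t,x) - t n H_{n-1}(t,x)`; equivalently characterized
by the generating function `exp (a x - a² t / 2) = ∑ aⁿ H_n(t,x) / n!`. -/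
def hermitePoly : ℕ → ℝ → ℝ → ℝ
  | 0, _, _ => 1
  | 1, _, x => x
  | (n + 2), t, x => x * hermitePoly (n + 1) t x - t * (n + 1) * hermitePoly n t x

/-- `X` is a standard one-dimensional Brownian motion on `(Ω, P)`. -/
def IsBrownianMotion {Ω : Type*} [MeasurableSpace Ω] (P : Measure Ω) (X : ℝ → Ω → ℝ) : Prop :=
  (∀ ω, X 0 ω = 0) ∧
  (∀ t, Measurable (X t)) ∧
  (∀ ω, Continuous fun t => X t ω) ∧
  (∀ s t : ℝ, 0 ≤ s → s ≤ t →
    Measure.map (fun ω => X t ω - X s ω) P = gaussianReal 0 (Real.toNNReal (t - s))) ∧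
  (∀ (n : ℕ) (u : ℕ → ℝ), Monotone u → 0 ≤ u 0 →
    iIndepFun
      (fun i : Fin n => fun ω => X (u (i.1 + 1)) ω - X (u i.1) ω) P)

/-- The sigma-field generated by the process `X` up to time `t`. -/
def pastSigma {Ω : Type*} [MeasurableSpace Ω] (X : ℝ → Ω → ℝ) (t : ℝ) : MeasurableSpace Ω :=
  ⨆ s ∈ Set.Icc (0 : ℝ) t, MeasurableSpace.comap (X s) inferInstance

/-- `X` is a standard `d`-dimensional Brownian motion: each coordinate is a Brownian motion and
the coordinate processes are independent. -/
def IsBrownianMotionD {Ω : Type*} [MeasurableSpace Ω] (d : ℕ) (P : Measure Ω)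
    (X : ℝ → Ω → Fin d → ℝ) : Prop :=
  (∀ i : Fin d, IsBrownianMotion P (fun t ω => X t ω i)) ∧
  iIndep (fun i : Fin d => ⨆ t : ℝ, MeasurableSpace.comap (fun ω => X t ω i) inferInstance) P

/-!
By Fubini, `E[sin(k X_t) N_t] = ∫ E[sin(k X_t) 𝓔(vX)_t] μ(dv)`; Fubini applies because
`|sin| ≤ 1` and every `𝓔(vX)_t` has mean one. Each inner expectation is the imaginary part of the
complex moment generating function of the centred Gaussian `X_t` at `v + ik` (Girsanov's shift
`X_t ↦ X_t + vt`), namely `e^{-k²t/2} sin(kvt) ≥ -e^{-k²t/2}`.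
-/

open scoped NNReal

open Complex in
lemma integral_exp_mul_sin_eq_im_complexMGF {Ω : Type*} {mΩ : MeasurableSpace Ω}
    {P : Measure Ω} {Y : Ω → ℝ} {z : ℂ} (hz : Integrable (fun ω => cexp (z * Y ω)) P) :
    ∫ ω, Real.exp (z.re * Y ω) * Real.sin (z.im * Y ω) ∂P = (complexMGF Y P z).im :=
  calc _ = ∫ ω, (cexp (z * Y ω)).im ∂P := by simp [Complex.exp_im]
    _ = _ := integral_im hz

section GaussianLaw

variable {Ω : Type*} {mΩ : MeasurableSpace Ω} {P : Measure Ω} {Y : Ω → ℝ} {m : ℝ}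
  {v : ℝ≥0}

lemma integrable_exp_mul_of_map_eq_gaussianReal (hY : P.map Y = gaussianReal m v) (a : ℝ) :
    Integrable (fun ω => Real.exp (a * Y ω)) P := by
  have hYm : AEMeasurable Y P := aemeasurable_of_map_neZero (by rw [hY]; infer_instance)
  exact (integrable_map_measure (by fun_prop) hYm).mp
    (hY ▸ integrable_exp_mul_gaussianReal a)

lemma integral_exp_mul_sub_of_map_eq_gaussianReal (hY : P.map Y = gaussianReal 0 v) (a : ℝ) :
    ∫ ω, Real.exp (a * Y ω - a ^ 2 * v / 2) ∂P = 1 := by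
  have hmgf := mgf_gaussianReal hY a
  simp_rw [sub_eq_add_neg, Real.exp_add, integral_mul_const]
  rw [← mgf, hmgf, ← Real.exp_add, Real.exp_eq_one_iff]
  ring

open Complex in
lemma integral_sin_mul_exp_of_map_eq_gaussianReal (hY : P.map Y = gaussianReal 0 v) (k a : ℝ) :
    ∫ ω, Real.sin (k * Y ω) * Real.exp (a * Y ω - a ^ 2 * v / 2) ∂P
      = Real.exp (-k ^ 2 * v / 2) * Real.sin (k * a * v) := by
  have hYm : AEMeasurable Y P := aemeasurable_of_map_neZero (by rw [hY]; infer_instance)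
  have hint : Integrable (fun ω => cexp ((a + k * I) * Y ω)) P :=
    integrable_cexp_mul_of_re_mem_integrableExpSet hYm
      (by simpa [integrableExpSet] using integrable_exp_mul_of_map_eq_gaussianReal hY a)
  have hexponent : (a + k * I) * ((0 : ℝ) : ℂ) + ((v : ℝ) : ℂ) * (a + k * I) ^ 2 / 2
      = ((v * (a ^ 2 - k ^ 2) / 2 : ℝ) : ℂ) + ((v * a * k : ℝ) : ℂ) * I := by
    push_cast
    ring_nf
    rw [I_sq]
    ring
  have him := integral_exp_mul_sin_eq_im_complexMGF hint
  rw [complexMGF_gaussianReal hY, hexponent, exp_im] at him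
  simp only [add_re, add_im, ofReal_re, ofReal_im, re_ofReal_mul, im_ofReal_mul, I_re, I_im,
    mul_zero, mul_one, add_zero, zero_add] at him
  calc _ = (∫ ω, Real.exp (a * Y ω) * Real.sin (k * Y ω) ∂P)
          * Real.exp (-(a ^ 2 * v / 2)) := by
        rw [← integral_mul_const]
        congr with ω
        rw [sub_eq_add_neg, Real.exp_add]
        ring
    _ = _ := by
        rw [him, mul_right_comm, ← Real.exp_add]
        congr 2 <;> ring

lemma integral_mul_integral_exp_swap_of_map_eq_gaussianReal [SFinite P] (hYm : Measurable Y)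
    (hY : P.map Y = gaussianReal 0 v) (μ : Measure ℝ) [IsFiniteMeasure μ] {g : ℝ → ℝ}
    (hg : Measurable g) {C : ℝ} (hgC : ∀ x, |g x| ≤ C) :
    ∫ ω, g (Y ω) * ∫ a, Real.exp (a * Y ω - a ^ 2 * v / 2) ∂μ ∂P
      = ∫ a, ∫ ω, g (Y ω) * Real.exp (a * Y ω - a ^ 2 * v / 2) ∂P ∂μ := by
  set F : Ω × ℝ → ℝ := fun p => g (Y p.1) * Real.exp (p.2 * Y p.1 - p.2 ^ 2 * v / 2) with hF
  have hFm : StronglyMeasurable F := (by fun_prop : Measurable F).stronglyMeasurable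
  have hexp_int (a : ℝ) : Integrable (fun ω => Real.exp (a * Y ω - a ^ 2 * v / 2)) P := by
    simp_rw [sub_eq_add_neg, Real.exp_add]
    exact (integrable_exp_mul_of_map_eq_gaussianReal hY a).mul_const _
  have hF_le (a : ℝ) (ω : Ω) : ‖F (ω, a)‖ ≤ C * Real.exp (a * Y ω - a ^ 2 * v / 2) := by
    rw [hF, norm_mul, Real.norm_eq_abs, Real.norm_of_nonneg (Real.exp_pos _).le]
    exact mul_le_mul_of_nonneg_right (hgC _) (Real.exp_pos _).le
  have hF_int (a : ℝ) : Integrable (fun ω => F (ω, a)) P :=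
    ((hexp_int a).const_mul C).mono'
      (hFm.comp_measurable measurable_prodMk_right).aestronglyMeasurable (ae_of_all _ (hF_le a))
  have hF_norm_le (a : ℝ) : ‖∫ ω, ‖F (ω, a)‖ ∂P‖ ≤ C := by
    rw [Real.norm_of_nonneg (integral_nonneg fun _ => norm_nonneg _)]
    calc ∫ ω, ‖F (ω, a)‖ ∂P ≤ ∫ ω, C * Real.exp (a * Y ω - a ^ 2 * v / 2) ∂P :=
          integral_mono (hF_int a).norm ((hexp_int a).const_mul C) (hF_le a)
      _ = C := by rw [integral_const_mul, integral_exp_mul_sub_of_map_eq_gaussianReal hY, mul_one]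
  have hF_prod : Integrable F (P.prod μ) :=
    (integrable_prod_iff' hFm.aestronglyMeasurable).mpr ⟨ae_of_all _ hF_int,
      Integrable.of_bound hFm.norm.integral_prod_left'.aestronglyMeasurable C
        (ae_of_all _ hF_norm_le)⟩
  simp_rw [← integral_const_mul]
  exact integral_integral_swap hF_prod

end GaussianLaw

lemma IsBrownianMotion.map_eq_gaussianReal {Ω : Type*} [MeasurableSpace Ω] {P : Measure Ω}
    {X : ℝ → Ω → ℝ} (hX : IsBrownianMotion P X) {t : ℝ} (ht : 0 ≤ t) :
    P.map (X t) = gaussianReal 0 t.toNNReal := by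
  simpa [hX.1] using hX.2.2.2.1 0 t le_rfl ht

lemma neg_le_integral_mul_sin (μ : Measure ℝ) [IsProbabilityMeasure μ] {c : ℝ} (hc : 0 ≤ c)
    {f : ℝ → ℝ} (hf : Measurable f) :
    -c ≤ ∫ a, c * Real.sin (f a) ∂μ := by
  have hint : Integrable (fun a => c * Real.sin (f a)) μ :=
    Integrable.of_bound (by fun_prop) c (ae_of_all _ fun a => by
      rw [norm_mul, Real.norm_of_nonneg hc, Real.norm_eq_abs]
      exact mul_le_of_le_one_right hc (Real.abs_sin_le_one _))
  calc -c = ∫ _, -c ∂μ := by simp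
    _ ≤ _ := integral_mono (integrable_const _) hint fun a => by
      nlinarith [Real.neg_one_le_sin (f a)]

theorem widder_sine_lower_bound_general {Ω : Type*} [MeasurableSpace Ω] (P : Measure Ω)
    [IsProbabilityMeasure P] (X : ℝ → Ω → ℝ) (hX : IsBrownianMotion P X)
    (k : ℝ)
    (μ : Measure ℝ) [IsProbabilityMeasure μ] (t : ℝ) (ht0 : 0 ≤ t) :
    -Real.exp (-k ^ 2 * t / 2)
      ≤ ∫ ω, Real.sin (k * X t ω) * (∫ v, Real.exp (v * X t ω - v ^ 2 * t / 2) ∂μ) ∂P := by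
  have hlaw := hX.map_eq_gaussianReal ht0
  have hvar : ((t.toNNReal : ℝ≥0) : ℝ) = t := Real.coe_toNNReal t ht0
  have hswap := integral_mul_integral_exp_swap_of_map_eq_gaussianReal (hX.2.1 t) hlaw μ
    (g := fun x => Real.sin (k * x)) (by fun_prop) (fun x => Real.abs_sin_le_one _)
  have hgirsanov := integral_sin_mul_exp_of_map_eq_gaussianReal hlaw k
  simp only [hvar] at hswap hgirsanov
  rw [hswap]
  simp only [hgirsanov]
  exact neg_le_integral_mul_sin μ (Real.exp_pos _).le (by fun_prop)

/-- for any probability measure `μ` on `ℝ` and `N_t = ∫ 𝓔(vX)_t μ(dv)`, one has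
`E[sin(k X_t) N_t] ≥ −e^{−k²t/2}` for all `0 ≤ t ≤ T`. -/
theorem widder_sine_lower_bound {Ω : Type*} [MeasurableSpace Ω] (P : Measure Ω)
    [IsProbabilityMeasure P] (X : ℝ → Ω → ℝ) (hX : IsBrownianMotion P X)
    (T k : ℝ) (hT : 0 < T) (hk : 0 < k)
    (μ : Measure ℝ) [IsProbabilityMeasure μ] (t : ℝ) (ht0 : 0 ≤ t) (htT : t ≤ T) :
    -Real.exp (-k ^ 2 * t / 2)
      ≤ ∫ ω, Real.sin (k * X t ω) * (∫ v, Real.exp (v * X t ω - v ^ 2 * t / 2) ∂μ) ∂P :=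
  widder_sine_lower_bound_general P X hX k μ t ht0
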